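/- With the notation of the context, a point (x,y) ∈ ℤ² lies outside ℳ_ℤ(∅) ∪ ℳ_ℤ(U) ∪ ℳ_ℤ(V) ∪ ℳ_ℤ(U∪V) if and only if one of the following holds: (i) −ℓ₂ < y < 0; or (ii) y ≥ 0 and −ℓ₁ < x < c^{ℓ₂}·y; or (iii) y ≤ −ℓ₂ and 0 > x + ĉ > c^{ℓ₂}·(y + ℓ₂) − ℓ₁. (This is the description of the immaculate line bundles on the smooth complete toric variety of Picard rank 2 determined by (ℓ₁, ℓ₂, c).) -/

import Mathlib

open scoped BigOperators

/-- The integral class map `π : ℤ^{ℓ₁} × ℤ^{ℓ₂} → ℤ²` for the Picard-rank-2 data. -/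
def picTwoPiZ (ℓ₁ ℓ₂ : ℕ) (c : Fin ℓ₂ → ℤ)
    (x : Fin ℓ₁ ⊕ Fin ℓ₂ → ℤ) : ℤ × ℤ :=
  ((∑ i, x (Sum.inl i)) + ∑ j, c j * x (Sum.inr j), ∑ j, x (Sum.inr j))

/-- The integral maculate set `ℳ_ℤ(R)`. -/
def picTwoMacZ (ℓ₁ ℓ₂ : ℕ) (c : Fin ℓ₂ → ℤ)
    (R : Set (Fin ℓ₁ ⊕ Fin ℓ₂)) : Set (ℤ × ℤ) :=
  picTwoPiZ ℓ₁ ℓ₂ c '' {x | (∀ ρ ∈ R, x ρ ≤ -1) ∧ ∀ ρ ∉ R, 0 ≤ x ρ}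

/-!
The second coordinate `y = ∑ b j` of a point of `ℳ_ℤ(R)` only sees the signs imposed on `b`
(`y ≥ 0`, or `y ≤ -ℓ₂`), and the `a`-part shifts the first coordinate by an arbitrary amount
`≥ 0` or `≤ -ℓ₁`. So for fixed `y` only the extreme value of `∑ c j b j` matters; as `c` is
antitone, it is attained by putting all the freedom of `b` on the first or the last index,
where `c` is largest (`= 0`) or smallest (`= c^{ℓ₂}`). Each region is thus cut out by two linear
inequalities, and the complement of the four is read off by linear arithmetic.
-/

open Finset

section PiSingle

variable {ι R : Type*} [DecidableEq ι]

theorem single_apply_nonneg [Zero R] [Preorder R] {t : R} (ht : 0 ≤ t) {k i : ι} :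
    0 ≤ (Pi.single k t : ι → R) i := by
  rw [Pi.single_apply]; split_ifs <;> simp [ht]

theorem add_single_apply_le [AddZeroClass R] [Preorder R] [AddLeftMono R] {d t : R}
    (ht : t ≤ 0) {k i : ι} : d + (Pi.single k t : ι → R) i ≤ d := by
  refine add_le_of_nonpos_right ?_
  rw [Pi.single_apply]; split_ifs <;> simp [ht]

variable [Fintype ι] [CommSemiring R]

theorem sum_const_add_single (k : ι) (d t : R) :
    ∑ i, (d + (Pi.single k t : ι → R) i) = Fintype.card ι * d + t := by
  simp [sum_add_distrib]

theorem sum_mul_const_add_single (c : ι → R) (k : ι) (d t : R) :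
    ∑ i, c i * (d + (Pi.single k t : ι → R) i) = (∑ i, c i) * d + c k * t := by
  simp [mul_add, sum_add_distrib, sum_mul, Pi.single_apply]

end PiSingle

theorem sum_le_neg_card {ι R : Type*} [Fintype ι] [Ring R] [PartialOrder R]
    [IsOrderedAddMonoid R] {a : ι → R} (ha : ∀ i, a i ≤ -1) :
    ∑ i, a i ≤ -Fintype.card ι := by
  simpa using sum_le_card_nsmul univ a (-1) fun i _ => ha i

section Maculate

variable {ℓ₁ ℓ₂ : ℕ} {c : Fin ℓ₂ → ℤ}

theorem mem_picTwoMacZ_iff {R : Set (Fin ℓ₁ ⊕ Fin ℓ₂)} {x y : ℤ} :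
    (x, y) ∈ picTwoMacZ ℓ₁ ℓ₂ c R ↔ ∃ (a : Fin ℓ₁ → ℤ) (b : Fin ℓ₂ → ℤ),
      (∀ i, (Sum.inl i ∈ R → a i ≤ -1) ∧ (Sum.inl i ∉ R → 0 ≤ a i)) ∧
      (∀ j, (Sum.inr j ∈ R → b j ≤ -1) ∧ (Sum.inr j ∉ R → 0 ≤ b j)) ∧
      ∑ i, a i + ∑ j, c j * b j = x ∧ ∑ j, b j = y := by
  constructor
  · rintro ⟨f, ⟨hneg, hpos⟩, hf⟩
    simp only [picTwoPiZ, Prod.mk.injEq] at hf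
    exact ⟨f ∘ Sum.inl, f ∘ Sum.inr, fun i => ⟨hneg _, hpos _⟩, fun j => ⟨hneg _, hpos _⟩, hf⟩
  · rintro ⟨a, b, ha, hb, hx, hy⟩
    refine ⟨Sum.elim a b, ⟨?_, ?_⟩, by simp [picTwoPiZ, hx, hy]⟩
    · rintro (i | j) h
      exacts [(ha i).1 h, (hb j).1 h]
    · rintro (i | j) h
      exacts [(ha i).2 h, (hb j).2 h]

variable [NeZero ℓ₁] {k : Fin ℓ₂} {x y : ℤ}

theorem mem_picTwoMacZ_empty_iff (hk : ∀ j, c k ≤ c j) :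
    (x, y) ∈ picTwoMacZ ℓ₁ ℓ₂ c ∅ ↔ 0 ≤ y ∧ c k * y ≤ x := by
  simp only [mem_picTwoMacZ_iff, Set.mem_empty_iff_false, false_imp_iff, not_false_iff,
    true_imp_iff, true_and]
  constructor
  · rintro ⟨a, b, ha, hb, rfl, rfl⟩
    have hbound : c k * ∑ j, b j ≤ ∑ j, c j * b j := by
      rw [mul_sum]
      exact sum_le_sum fun j _ => mul_le_mul_of_nonneg_right (hk j) (hb j)
    exact ⟨sum_nonneg fun j _ => hb j, by linarith [sum_nonneg fun i (_ : i ∈ univ) => ha i]⟩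
  · rintro ⟨hy, hx⟩
    refine ⟨Pi.single 0 (x - c k * y), Pi.single k y,
      fun i => single_apply_nonneg (by linarith), fun j => single_apply_nonneg hy,
      by simp [Pi.single_apply], by simp⟩

theorem mem_picTwoMacZ_inl_iff (hk : ∀ j, c j ≤ c k) :
    (x, y) ∈ picTwoMacZ ℓ₁ ℓ₂ c (Set.range Sum.inl) ↔ 0 ≤ y ∧ x ≤ c k * y - ℓ₁ := by
  simp only [mem_picTwoMacZ_iff, Set.mem_range, Sum.inl.injEq, reduceCtorEq, exists_eq,
    exists_false, not_true_eq_false, not_false_eq_true, IsEmpty.forall_iff, forall_const,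
    and_true, true_and]
  constructor
  · rintro ⟨a, b, ha, hb, rfl, rfl⟩
    have hbound : ∑ j, c j * b j ≤ c k * ∑ j, b j := by
      rw [mul_sum]
      exact sum_le_sum fun j _ => mul_le_mul_of_nonneg_right (hk j) (hb j)
    have ha_sum := sum_le_neg_card ha
    rw [Fintype.card_fin] at ha_sum
    exact ⟨sum_nonneg fun j _ => hb j, by linarith⟩
  · rintro ⟨hy, hx⟩
    refine ⟨fun i => -1 + (Pi.single 0 (x - c k * y + ℓ₁) : Fin ℓ₁ → ℤ) i, Pi.single k y,
      fun i => add_single_apply_le (by linarith),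
      fun j => single_apply_nonneg hy, ?_, by simp⟩
    rw [sum_const_add_single]
    simp [Pi.single_apply]

theorem mem_picTwoMacZ_inr_iff (hk : ∀ j, c j ≤ c k) :
    (x, y) ∈ picTwoMacZ ℓ₁ ℓ₂ c (Set.range Sum.inr) ↔
      y ≤ -ℓ₂ ∧ c k * (y + ℓ₂) - ∑ j, c j ≤ x := by
  simp only [mem_picTwoMacZ_iff, Set.mem_range, Sum.inr.injEq, reduceCtorEq, exists_eq,
    exists_false, not_true_eq_false, not_false_eq_true, IsEmpty.forall_iff, forall_const,
    and_true, true_and]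
  constructor
  · rintro ⟨a, b, ha, hb, rfl, rfl⟩
    have hbound : c k * ∑ j, (b j + 1) ≤ ∑ j, c j * (b j + 1) := by
      rw [mul_sum]
      exact sum_le_sum fun j _ => mul_le_mul_of_nonpos_right (hk j) (by linarith [hb j])
    have hb_sum := sum_le_neg_card hb
    simp only [mul_add, mul_one, sum_add_distrib, sum_const, card_univ, Fintype.card_fin,
      nsmul_eq_mul] at hbound hb_sum ⊢
    exact ⟨hb_sum, by linarith [sum_nonneg fun i (_ : i ∈ univ) => ha i]⟩
  · rintro ⟨hy, hx⟩
    refine ⟨Pi.single 0 (x + ∑ j, c j - c k * (y + ℓ₂)),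
      fun j => -1 + (Pi.single k (y + ℓ₂) : Fin ℓ₂ → ℤ) j,
      fun i => single_apply_nonneg (by linarith),
      fun j => add_single_apply_le (by linarith), ?_, ?_⟩
    · rw [sum_mul_const_add_single]
      simp
    · rw [sum_const_add_single]
      simp

theorem mem_picTwoMacZ_inl_union_inr_iff (hk : ∀ j, c k ≤ c j) :
    (x, y) ∈ picTwoMacZ ℓ₁ ℓ₂ c (Set.range Sum.inl ∪ Set.range Sum.inr) ↔
      y ≤ -ℓ₂ ∧ x ≤ c k * (y + ℓ₂) - ∑ j, c j - ℓ₁ := by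
  simp only [mem_picTwoMacZ_iff, Set.range_inl_union_range_inr, Set.mem_univ,
    not_true_eq_false, IsEmpty.forall_iff, forall_const, and_true]
  constructor
  · rintro ⟨a, b, ha, hb, rfl, rfl⟩
    have hbound : ∑ j, c j * (b j + 1) ≤ c k * ∑ j, (b j + 1) := by
      rw [mul_sum]
      exact sum_le_sum fun j _ => mul_le_mul_of_nonpos_right (hk j) (by linarith [hb j])
    have ha_sum := sum_le_neg_card ha
    have hb_sum := sum_le_neg_card hb
    simp only [mul_add, mul_one, sum_add_distrib, sum_const, card_univ, Fintype.card_fin,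
      nsmul_eq_mul] at hbound ha_sum hb_sum ⊢
    exact ⟨hb_sum, by linarith⟩
  · rintro ⟨hy, hx⟩
    refine ⟨fun i => -1 + (Pi.single 0 (x - c k * (y + ℓ₂) + ∑ j, c j + ℓ₁) : Fin ℓ₁ → ℤ) i,
      fun j => -1 + (Pi.single k (y + ℓ₂) : Fin ℓ₂ → ℤ) j,
      fun i => add_single_apply_le (by linarith),
      fun j => add_single_apply_le (by linarith), ?_, ?_⟩
    · rw [sum_const_add_single, sum_mul_const_add_single]
      simp
    · rw [sum_const_add_single]
      simp

end Maculate

/-- Description of the immaculate locus of a smooth complete toric variety of Picard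
rank 2: `(x,y) ∈ ℤ²` avoids all four maculate sets iff `-ℓ₂ < y < 0`, or
`y ≥ 0` and `-ℓ₁ < x < c^{ℓ₂}·y`, or `y ≤ -ℓ₂` and `0 > x + ĉ > c^{ℓ₂}(y+ℓ₂) - ℓ₁`. -/
theorem statement10 (ℓ₁ ℓ₂ : ℕ) (h1 : 2 ≤ ℓ₁) (h2 : 2 ≤ ℓ₂)
    (c : Fin ℓ₂ → ℤ) (hc0 : c ⟨0, by omega⟩ = 0) (hmono : Antitone c)
    (p : ℤ × ℤ) :
    (p ∉ picTwoMacZ ℓ₁ ℓ₂ c ∅ ∧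
     p ∉ picTwoMacZ ℓ₁ ℓ₂ c (Set.range Sum.inl) ∧
     p ∉ picTwoMacZ ℓ₁ ℓ₂ c (Set.range Sum.inr) ∧
     p ∉ picTwoMacZ ℓ₁ ℓ₂ c (Set.range Sum.inl ∪ Set.range Sum.inr)) ↔
    ((-(ℓ₂ : ℤ) < p.2 ∧ p.2 < 0) ∨
     (0 ≤ p.2 ∧ -(ℓ₁ : ℤ) < p.1 ∧ p.1 < c ⟨ℓ₂ - 1, by omega⟩ * p.2) ∨
     (p.2 ≤ -(ℓ₂ : ℤ) ∧ p.1 + (∑ ν, c ν) < 0 ∧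
       c ⟨ℓ₂ - 1, by omega⟩ * (p.2 + (ℓ₂ : ℤ)) - (ℓ₁ : ℤ) < p.1 + (∑ ν, c ν))) := by
  have : NeZero ℓ₁ := ⟨by omega⟩
  obtain ⟨x, y⟩ := p
  have hmin : ∀ j, c ⟨ℓ₂ - 1, by omega⟩ ≤ c j := fun j =>
    hmono (Fin.le_def.2 (Nat.le_sub_one_of_lt j.isLt))
  have hmax : ∀ j, c j ≤ c ⟨0, by omega⟩ := fun j => hmono (Fin.le_def.2 (Nat.zero_le _))
  rw [mem_picTwoMacZ_empty_iff hmin, mem_picTwoMacZ_inl_iff hmax, mem_picTwoMacZ_inr_iff hmax,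
    mem_picTwoMacZ_inl_union_inr_iff hmin, hc0]
  dsimp only
  omega
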